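/- At each fixed t > 0 and x ∈ ℝ^d with x ≠ 0, if the mass parameter C = C(m) is chosen so that the total mass ∫ B_m(t,·) dx = M is fixed, then B_m(t,x) converges, as m → 1⁺, to M·E(t,x), where E(t,x) = (4πt)^{-d/2} e^{-|x|²/(4t)} is the heat kernel. -/

import Mathlib

/-!
Write `ε = m - 1`. Since `log (1 - ε c) = -ε c + O(ε²)`, the power `(1 - ε c)₊ ^ (1 / ε)` tends to
`exp (-c)`, and `1 + u ≤ exp u` bounds it by `exp (-c)`. By dominated convergence the mass of
the profile with `C = 1` tends to the Gaussian mass `(4π) ^ (d / 2)`. The substitution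
`x ↦ √C x` turns the normalization into `C ^ (1 / ε + d / 2) · I(m) = M` with `I(m)` that mass,
which forces `C → 1` and `C ^ (1 / ε) → M (4π) ^ (-d / 2)`; the pointwise limit then follows from
the first step.
-/

open Real MeasureTheory Filter Topology Module

lemma tendsto_sub_one_nhdsGT_one : Tendsto (fun m : ℝ => m - 1) (𝓝[>] 1) (𝓝[>] 0) := by
  have hm : Tendsto (fun m : ℝ => m) (𝓝[>] 1) (𝓝 1) := nhdsWithin_le_nhds
  refine tendsto_nhdsWithin_iff.mpr ⟨by simpa using hm.sub_const 1, ?_⟩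
  filter_upwards [self_mem_nhdsWithin] with m (hm₁ : 1 < m)
  exact sub_pos.mpr hm₁

section LimitOfPowers

variable {ι : Type*} {l : Filter ι} {ε c : ι → ℝ} {c₀ : ℝ}

lemma tendsto_log_one_sub_mul_div (hε : Tendsto ε l (𝓝[>] 0)) (hc : Tendsto c l (𝓝 c₀)) :
    Tendsto (fun i => log (1 - ε i * c i) / ε i) l (𝓝 (-c₀)) := by
  have hε₀ : Tendsto ε l (𝓝 0) := tendsto_nhds_of_tendsto_nhdsWithin hε
  have hεc : Tendsto (fun i => ε i * c i) l (𝓝 0) := by simpa using hε₀.mul hc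
  have hbound : Tendsto (fun i => 2 * ε i * c i ^ 2) l (𝓝 0) := by
    simpa using (hε₀.const_mul 2).mul (hc.pow 2)
  -- `|x + log (1 - x)| ≤ x ^ 2 / (1 - |x|)` with `x = ε c`
  have herror : Tendsto (fun i => (ε i * c i + log (1 - ε i * c i)) / ε i) l (𝓝 0) := by
    refine squeeze_zero_norm' ?_ hbound
    have hsmall : ∀ᶠ i in l, |ε i * c i| < 1 / 2 := by
      have := hεc.abs
      rw [abs_zero] at this
      exact this.eventually (eventually_lt_nhds (by norm_num))
    filter_upwards [eventually_mem_of_tendsto_nhdsWithin hε, hsmall] with i (hεi : 0 < ε i) hsmall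
    have hlog := abs_log_sub_add_sum_range_le (x := ε i * c i) (by linarith) 1
    simp only [Finset.range_one, Finset.sum_singleton, zero_add, pow_one, Nat.cast_zero,
      div_one] at hlog
    rw [Real.norm_eq_abs, abs_div, abs_of_pos hεi, div_le_iff₀ hεi]
    calc _ ≤ |ε i * c i| ^ 2 / (1 - |ε i * c i|) := hlog
      _ ≤ |ε i * c i| ^ 2 / (1 / 2) := by gcongr; linarith
      _ = 2 * ε i * c i ^ 2 * ε i := by rw [sq_abs]; ring
  refine (add_zero (-c₀) ▸ hc.neg.add herror).congr' ?_
  filter_upwards [eventually_mem_of_tendsto_nhdsWithin hε] with i (hεi : 0 < ε i)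
  field_simp
  ring

lemma tendsto_max_one_sub_mul_rpow (hε : Tendsto ε l (𝓝[>] 0)) (hc : Tendsto c l (𝓝 c₀)) :
    Tendsto (fun i => (max (1 - ε i * c i) 0) ^ (1 / ε i)) l (𝓝 (exp (-c₀))) := by
  have hεc : Tendsto (fun i => ε i * c i) l (𝓝 0) := by
    simpa using (tendsto_nhds_of_tendsto_nhdsWithin hε).mul hc
  refine ((continuous_exp.tendsto _).comp (tendsto_log_one_sub_mul_div hε hc)).congr' ?_
  filter_upwards [hεc.eventually (eventually_lt_nhds one_pos)] with i hlt
  have hpos : 0 < 1 - ε i * c i := by linarith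
  rw [Function.comp_apply, max_eq_left hpos.le, rpow_def_of_pos hpos, div_eq_mul_one_div]

lemma tendsto_of_rpow_one_div_add_mul_eq {C I : ι → ℝ} {a M I₀ : ℝ}
    (hε : Tendsto ε l (𝓝[>] 0)) (hI : Tendsto I l (𝓝 I₀)) (hI₀ : 0 < I₀) (hM : 0 < M)
    (hC : ∀ᶠ i in l, 0 < C i) (hmass : ∀ᶠ i in l, C i ^ (1 / ε i + a) * I i = M) :
    Tendsto C l (𝓝 1) ∧ Tendsto (fun i => C i ^ (1 / ε i)) l (𝓝 (M / I₀)) := by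
  have hε₀ : Tendsto ε l (𝓝 0) := tendsto_nhds_of_tendsto_nhdsWithin hε
  -- taking logarithms, `(1 + a ε) (log C / ε) = log M - log I`
  have hlog : Tendsto (fun i => log (C i) / ε i) l (𝓝 (log (M / I₀))) := by
    have hden := (hε₀.const_mul a).const_add 1
    have hden₀ : (1 : ℝ) + a * 0 ≠ 0 := by simp
    have hlim := (tendsto_const_nhds (x := log M)).sub (hI.log hI₀.ne') |>.div hden hden₀
    rw [mul_zero, add_zero, div_one, ← log_div hM.ne' hI₀.ne'] at hlim
    refine hlim.congr' ?_
    filter_upwards [eventually_mem_of_tendsto_nhdsWithin hε, hC, hmass,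
      hI.eventually (eventually_gt_nhds hI₀), hden.eventually_ne hden₀]
      with i (hεi : 0 < ε i) hCi hmassi hIi hdeni
    rw [Pi.div_apply, ← hmassi, log_mul (by positivity) hIi.ne', log_rpow hCi, add_sub_cancel_right,
      div_eq_div_iff hdeni hεi.ne']
    field_simp
  constructor
  · have hlogC : Tendsto (fun i => ε i * (log (C i) / ε i)) l (𝓝 0) := by
      simpa using hε₀.mul hlog
    refine (exp_zero ▸ (continuous_exp.tendsto 0).comp hlogC).congr' ?_
    filter_upwards [eventually_mem_of_tendsto_nhdsWithin hε, hC] with i (hεi : 0 < ε i) hCi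
    rw [Function.comp_apply, mul_div_cancel₀ _ hεi.ne', exp_log hCi]
  · refine (exp_log (div_pos hM hI₀) ▸ (continuous_exp.tendsto _).comp hlog).congr' ?_
    filter_upwards [hC] with i hCi
    rw [Function.comp_apply, rpow_def_of_pos hCi, div_eq_mul_one_div]

end LimitOfPowers

lemma max_one_sub_mul_rpow_le_exp {ε : ℝ} (hε : 0 < ε) (c : ℝ) :
    (max (1 - ε * c) 0) ^ (1 / ε) ≤ exp (-c) :=
  calc (max (1 - ε * c) 0) ^ (1 / ε) ≤ (exp (-(ε * c))) ^ (1 / ε) := by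
        refine rpow_le_rpow (le_max_right _ _) (max_le ?_ (exp_pos _).le) (by positivity)
        linarith [add_one_le_exp (-(ε * c))]
    _ = exp (-c) := by rw [← exp_mul]; field_simp

lemma max_sub_rpow_eq_rpow_mul {C : ℝ} (hC : 0 < C) (s p : ℝ) :
    (max (C - s) 0) ^ p = C ^ p * (max (1 - s / C) 0) ^ p := by
  rw [← mul_rpow hC.le (le_max_right _ _), mul_max_of_nonneg _ _ hC.le, mul_zero, mul_sub,
    mul_one, mul_div_cancel₀ _ hC.ne']

section InnerProductSpace

variable {V : Type*} [NormedAddCommGroup V] [InnerProductSpace ℝ V] [FiniteDimensional ℝ V]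
  [MeasurableSpace V] [BorelSpace V]

lemma integral_max_sub_mul_sq_norm_rpow {C : ℝ} (hC : 0 < C) (a p : ℝ) :
    ∫ v : V, (max (C - a * ‖v‖ ^ 2) 0) ^ p
      = C ^ (p + finrank ℝ V / 2) * ∫ v : V, (max (1 - a * ‖v‖ ^ 2) 0) ^ p := by
  have hscale := Measure.integral_comp_smul_of_nonneg volume
    (fun v : V => (max (C - a * ‖v‖ ^ 2) 0) ^ p) √C (hR := sqrt_nonneg C)
  have hprofile (v : V) : (max (C - a * ‖√C • v‖ ^ 2) 0) ^ p
      = C ^ p * (max (1 - a * ‖v‖ ^ 2) 0) ^ p := by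
    rw [norm_smul, mul_pow, norm_of_nonneg (sqrt_nonneg C), sq_sqrt hC.le,
      max_sub_rpow_eq_rpow_mul hC]
    field_simp
  have hpow : √C ^ finrank ℝ V = C ^ (finrank ℝ V / 2 : ℝ) := by
    rw [sqrt_eq_rpow, ← rpow_natCast, ← rpow_mul hC.le]
    ring_nf
  simp only [hprofile, integral_const_mul, hpow, smul_eq_mul] at hscale
  rw [rpow_add hC, mul_comm (C ^ p), mul_assoc, hscale, mul_inv_cancel_left₀ (by positivity)]

lemma integrable_exp_neg_mul_sq_norm {δ : ℝ} (hδ : 0 < δ) :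
    Integrable (fun v : V => exp (-δ * ‖v‖ ^ 2)) :=
  Integrable.of_integral_ne_zero <| by
    rw [GaussianFourier.integral_rexp_neg_mul_sq_norm hδ]; positivity

lemma tendsto_integral_max_one_sub_mul_sq_norm_rpow {ι : Type*} {l : Filter ι}
    [l.IsCountablyGenerated] {ε k : ι → ℝ} {k₀ : ℝ} (hε : Tendsto ε l (𝓝[>] 0))
    (hk : Tendsto k l (𝓝 k₀)) (hk₀ : 0 < k₀) :
    Tendsto (fun i => ∫ v : V, (max (1 - ε i * k i * ‖v‖ ^ 2) 0) ^ (1 / ε i)) l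
      (𝓝 ((π / k₀) ^ (finrank ℝ V / 2 : ℝ))) := by
  rw [← GaussianFourier.integral_rexp_neg_mul_sq_norm hk₀]
  refine tendsto_integral_filter_of_dominated_convergence (fun v => exp (-(k₀ / 2) * ‖v‖ ^ 2))
    (.of_forall fun i => Measurable.aestronglyMeasurable (by fun_prop)) ?_
    (integrable_exp_neg_mul_sq_norm (by positivity)) ?_
  · filter_upwards [eventually_mem_of_tendsto_nhdsWithin hε,
      hk.eventually (eventually_ge_nhds (half_lt_self hk₀))] with i (hεi : 0 < ε i) hki
    refine .of_forall fun v => ?_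
    rw [norm_of_nonneg (by positivity), mul_assoc]
    refine (max_one_sub_mul_rpow_le_exp hεi _).trans (exp_le_exp.mpr ?_)
    nlinarith [sq_nonneg ‖v‖]
  · refine .of_forall fun v => ?_
    simpa only [mul_assoc, neg_mul] using tendsto_max_one_sub_mul_rpow hε (hk.mul_const (‖v‖ ^ 2))

lemma tendsto_of_integral_max_sub_mul_sq_norm_rpow_eq {C b : ℝ → ℝ} {M : ℝ} (hM : 0 < M)
    (hb : Tendsto b (𝓝[>] 1) (𝓝 (1 / 2))) (hC : ∀ m, 1 < m → 0 < C m)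
    (hmass : ∀ m, 1 < m →
      ∫ v : V, (max (C m - b m * (m - 1) * ‖v‖ ^ 2 / (2 * m)) 0) ^ (1 / (m - 1)) = M) :
    Tendsto C (𝓝[>] 1) (𝓝 1) ∧
      Tendsto (fun m => C m ^ (1 / (m - 1))) (𝓝[>] 1)
        (𝓝 (M / (4 * π) ^ (finrank ℝ V / 2 : ℝ))) := by
  have hk : Tendsto (fun m => b m / (2 * m)) (𝓝[>] 1) (𝓝 (1 / 4)) := by
    have hm : Tendsto (fun m : ℝ => m) (𝓝[>] 1) (𝓝 1) := nhdsWithin_le_nhds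
    have h := hb.div (hm.const_mul 2) (by norm_num)
    rwa [show (1 / 2 : ℝ) / (2 * 1) = 1 / 4 by norm_num] at h
  have hI := tendsto_integral_max_one_sub_mul_sq_norm_rpow (V := V) tendsto_sub_one_nhdsGT_one hk
    (by norm_num)
  rw [show π / (1 / 4) = 4 * π by ring] at hI
  refine tendsto_of_rpow_one_div_add_mul_eq (a := finrank ℝ V / 2) tendsto_sub_one_nhdsGT_one hI
    (by positivity) hM (eventually_nhdsWithin_of_forall hC) ?_
  filter_upwards [self_mem_nhdsWithin] with m (hm : 1 < m)
  rw [← hmass m hm, ← integral_max_sub_mul_sq_norm_rpow (hC m hm)]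
  congr 1 with v
  congr 3
  ring

end InnerProductSpace

lemma tendsto_rpow_neg_mul_max_sub_rpow {α b C : ℝ → ℝ} {a K t r : ℝ} (ht : 0 < t)
    (hα : Tendsto α (𝓝[>] 1) (𝓝 a)) (hb : Tendsto b (𝓝[>] 1) (𝓝 (1 / 2)))
    (hC : Tendsto C (𝓝[>] 1) (𝓝 1))
    (hCpow : Tendsto (fun m => C m ^ (1 / (m - 1))) (𝓝[>] 1) (𝓝 K)) :
    Tendsto (fun m => t ^ (-α m) *
        (max (C m - b m * (m - 1) * r / (2 * m * t ^ (2 * b m))) 0) ^ (1 / (m - 1)))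
      (𝓝[>] 1) (𝓝 (t ^ (-a) * K * exp (-(r / (4 * t))))) := by
  have htb : Tendsto (fun m => t ^ (2 * b m)) (𝓝[>] 1) (𝓝 t) := by
    simpa using tendsto_const_nhds.rpow (hb.const_mul 2) (Or.inl ht.ne')
  have hc : Tendsto (fun m => b m * r / (2 * m * t ^ (2 * b m) * C m)) (𝓝[>] 1)
      (𝓝 (r / (4 * t))) := by
    have hm : Tendsto (fun m : ℝ => m) (𝓝[>] 1) (𝓝 1) := nhdsWithin_le_nhds
    have h := (hb.mul_const r).div (((hm.const_mul 2).mul htb).mul hC) (by positivity)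
    rwa [show 1 / 2 * r / (2 * 1 * t * 1) = r / (4 * t) by ring] at h
  refine (((tendsto_const_nhds.rpow hα.neg (Or.inl ht.ne')).mul hCpow).mul
    (tendsto_max_one_sub_mul_rpow tendsto_sub_one_nhdsGT_one hc)).congr' ?_
  filter_upwards [hC.eventually (eventually_gt_nhds one_pos)] with m hCm
  rw [max_sub_rpow_eq_rpow_mul hCm, ← mul_assoc]
  congr 4
  field_simp

lemma tendsto_div_mul_sub_one_add_two (a d : ℝ) :
    Tendsto (fun m : ℝ => a / (d * (m - 1) + 2)) (𝓝 1) (𝓝 (a / 2)) :=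
  tendsto_const_nhds.div
    ((by fun_prop : Continuous fun m : ℝ => d * (m - 1) + 2).tendsto' 1 2 (by ring)) two_ne_zero

/-- If the mass parameter `C(m)` is normalized so that the Barenblatt solution has
total mass `M`, then at every fixed `t > 0`, `x`, the Barenblatt solution converges
pointwise to `M` times the heat kernel as `m → 1⁺`. -/
theorem barenblatt_tendsto_heat_kernel (d : ℕ) (hd : 1 ≤ d) (M : ℝ) (hM : 0 < M)
    (Cf α b : ℝ → ℝ)
    (hα : ∀ m, α m = d / (d * (m - 1) + 2)) (hb : ∀ m, b m = α m / d)
    (hCpos : ∀ m, 1 < m → 0 < Cf m)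
    (B : ℝ → ℝ → EuclideanSpace ℝ (Fin d) → ℝ)
    (hB : ∀ m t x, B m t x =
      t ^ (-(α m)) *
        (max (Cf m - b m * (m - 1) * ‖x‖ ^ 2 / (2 * m * t ^ (2 * b m))) 0) ^ (1 / (m - 1)))
    (hmass : ∀ m, 1 < m → ∫ x : EuclideanSpace ℝ (Fin d), B m 1 x = M)
    (E : ℝ → EuclideanSpace ℝ (Fin d) → ℝ)
    (hE : ∀ t x, E t x = (4 * Real.pi * t) ^ (-(d : ℝ) / 2) * Real.exp (-‖x‖ ^ 2 / (4 * t)))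
    (t : ℝ) (ht : 0 < t) (x : EuclideanSpace ℝ (Fin d)) :
    Filter.Tendsto (fun m => B m t x) (nhdsWithin 1 (Set.Ioi 1)) (nhds (M * E t x)) := by
  have hα₀ : Tendsto α (𝓝[>] 1) (𝓝 (d / 2)) := by
    simpa only [← hα] using (tendsto_div_mul_sub_one_add_two d d).mono_left nhdsWithin_le_nhds
  have hb₀ : Tendsto b (𝓝[>] 1) (𝓝 (1 / 2)) := by
    refine ((tendsto_div_mul_sub_one_add_two 1 d).mono_left nhdsWithin_le_nhds).congr fun m => ?_
    rw [hb, hα, div_right_comm, div_self (by exact_mod_cast (by omega : d ≠ 0))]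
  obtain ⟨hC, hCpow⟩ := tendsto_of_integral_max_sub_mul_sq_norm_rpow_eq hM hb₀ hCpos
    fun m hm => by simpa [hB] using hmass m hm
  have hvalue : t ^ (-(d / 2 : ℝ)) *
      (M / (4 * π) ^ (finrank ℝ (EuclideanSpace ℝ (Fin d)) / 2 : ℝ)) *
      exp (-(‖x‖ ^ 2 / (4 * t))) = M * E t x := by
    rw [hE, finrank_euclideanSpace_fin, neg_div, neg_div, mul_rpow (by positivity) ht.le,
      rpow_neg (by positivity : 0 ≤ 4 * π)]
    ring
  rw [← hvalue]
  simpa only [hB] using tendsto_rpow_neg_mul_max_sub_rpow (r := ‖x‖ ^ 2) ht hα₀ hb₀ hC hCpow
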